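/- Let f(x) = (1/√(2π))·exp(-x²/2) be the standard normal density and Q(x) = ∫_x^∞ f(t) dt its tail function. Then for all real x, Q(x)/(2f(x)) > 1/(x + √(x²+4)). -/

import Mathlib

open Real MeasureTheory Set

noncomputable def stdNormalPdf (x : ℝ) : ℝ := (Real.sqrt (2 * Real.pi))⁻¹ * Real.exp (-x ^ 2 / 2)

noncomputable def gaussQ (x : ℝ) : ℝ := ∫ t in Set.Ici x, stdNormalPdf t

noncomputable def gaussPhi (x : ℝ) : ℝ := ∫ t in Set.Iic x, stdNormalPdf t

/-!
With `r(x) = (√(x² + 4) - x) / 2 = 2 / (x + √(x² + 4))` the claim is `r f < Q`. The gap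
`g = Q - r f` tends to `0` at `+∞`, and since `r² + x r = 1` and `r' = -r / √(x² + 4)`,
its derivative is `g' = f r (1 / √(x² + 4) - r) < 0`. So `g` decreases strictly to `0`,
hence is positive.
-/

open Filter Topology

theorem hasDerivAt_integral_Ici {E : Type*} [NormedAddCommGroup E] [NormedSpace ℝ E]
    [CompleteSpace E] {f : ℝ → E} (hf : Integrable f) {x : ℝ} (hx : ContinuousAt f x) :
    HasDerivAt (fun y => ∫ t in Ici y, f t) (-f x) x := by
  have htail : (fun y => ∫ t in Ici y, f t) = fun y => (∫ t in Ici 0, f t) - ∫ t in 0..y, f t := by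
    funext y
    rw [← intervalIntegral.integral_Ici_sub_Ici' hf.integrableOn hf.integrableOn, sub_sub_cancel]
  rw [htail]
  have hd := intervalIntegral.integral_hasDerivAt_right (hf.intervalIntegrable (a := 0))
    hf.aestronglyMeasurable.stronglyMeasurableAtFilter hx
  exact hd.const_sub _

theorem StrictAnti.lt_of_tendsto_atTop {α β : Type*} [LinearOrder α] [NoMaxOrder α]
    [Preorder β] [TopologicalSpace β] [OrderClosedTopology β] {g : α → β} {b : β}
    (hg : StrictAnti g) (hlim : Tendsto g atTop (𝓝 b)) (x : α) : b < g x :=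
  let ⟨y, hxy⟩ := exists_gt x
  (hg.antitone.le_of_tendsto hlim y).trans_lt (hg hxy)

theorem stdNormalPdf_pos (x : ℝ) : 0 < stdNormalPdf x := by
  unfold stdNormalPdf
  positivity

theorem integrable_stdNormalPdf : Integrable stdNormalPdf := by
  convert (integrable_exp_neg_mul_sq (show (0 : ℝ) < 1 / 2 by norm_num)).const_mul
    (Real.sqrt (2 * π))⁻¹ using 2 with t
  unfold stdNormalPdf
  ring_nf

theorem hasDerivAt_stdNormalPdf (x : ℝ) : HasDerivAt stdNormalPdf (-x * stdNormalPdf x) x := by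
  have hexp : HasDerivAt (fun y : ℝ => -y ^ 2 / 2) (-x) x :=
    ((hasDerivAt_pow 2 x).neg.div_const 2).congr_deriv (by norm_num; ring)
  exact (hexp.exp.const_mul (Real.sqrt (2 * π))⁻¹).congr_deriv (by unfold stdNormalPdf; ring)

theorem tendsto_stdNormalPdf_atTop : Tendsto stdNormalPdf atTop (𝓝 0) := by
  have h : Tendsto (fun x : ℝ => -x ^ 2 / 2) atTop atBot :=
    (tendsto_neg_atTop_atBot.comp (tendsto_pow_atTop two_ne_zero)).atBot_div_const two_pos
  rw [← mul_zero (Real.sqrt (2 * π))⁻¹]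
  exact (tendsto_exp_atBot.comp h).const_mul _

theorem hasDerivAt_gaussQ (x : ℝ) : HasDerivAt gaussQ (-stdNormalPdf x) x :=
  hasDerivAt_integral_Ici integrable_stdNormalPdf (by unfold stdNormalPdf; fun_prop)

theorem tendsto_gaussQ_atTop : Tendsto gaussQ atTop (𝓝 0) :=
  tendsto_integral_Ici_zero tendsto_id

/-- Birnbaum's lower bound for the Mills ratio `gaussQ x / stdNormalPdf x`. -/
noncomputable def birnbaumBound (x : ℝ) : ℝ := (√(x ^ 2 + 4) - x) / 2

theorem abs_lt_sqrt_sq_add_four (x : ℝ) : |x| < √(x ^ 2 + 4) := by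
  rw [← sqrt_sq_eq_abs]
  exact sqrt_lt_sqrt (sq_nonneg x) (by linarith)

theorem birnbaumBound_pos (x : ℝ) : 0 < birnbaumBound x := by
  unfold birnbaumBound
  linarith [(abs_lt.1 (abs_lt_sqrt_sq_add_four x)).2]

theorem birnbaumBound_mul_add_self (x : ℝ) : birnbaumBound x * (birnbaumBound x + x) = 1 := by
  unfold birnbaumBound
  linear_combination (1 / 4 : ℝ) * sq_sqrt (show 0 ≤ x ^ 2 + 4 by positivity)

theorem birnbaumBound_eq_two_div (x : ℝ) : birnbaumBound x = 2 / (x + √(x ^ 2 + 4)) := by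
  have h := birnbaumBound_mul_add_self x
  have hsum : birnbaumBound x + x = (x + √(x ^ 2 + 4)) / 2 := by unfold birnbaumBound; ring
  rw [hsum] at h
  rw [eq_div_iff (by linarith [(abs_lt.1 (abs_lt_sqrt_sq_add_four x)).1])]
  linarith

theorem hasDerivAt_birnbaumBound (x : ℝ) :
    HasDerivAt birnbaumBound (-birnbaumBound x / √(x ^ 2 + 4)) x := by
  have hs : √(x ^ 2 + 4) ≠ 0 := (sqrt_pos.2 (by positivity)).ne'
  have h := ((((hasDerivAt_pow 2 x).add_const 4).sqrt (by positivity)).sub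
    (hasDerivAt_id x)).div_const 2
  refine h.congr_deriv ?_
  unfold birnbaumBound
  field_simp
  ring

theorem inv_sqrt_lt_birnbaumBound (x : ℝ) : (√(x ^ 2 + 4))⁻¹ < birnbaumBound x := by
  have hs := sqrt_pos.2 (show 0 < x ^ 2 + 4 by positivity)
  have hs2 := sq_sqrt (show 0 ≤ x ^ 2 + 4 by positivity)
  have hxs : x * √(x ^ 2 + 4) < x ^ 2 + 2 := by
    rcases le_or_gt x 0 with hx | hx
    · nlinarith
    · nlinarith [mul_pos hx hs]
  rw [inv_lt_iff_one_lt_mul₀ hs, birnbaumBound]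
  nlinarith

theorem birnbaumBound_le_one {x : ℝ} (hx : 0 ≤ x) : birnbaumBound x ≤ 1 := by
  have : √(x ^ 2 + 4) ≤ x + 2 := sqrt_le_iff.2 ⟨by linarith, by nlinarith⟩
  unfold birnbaumBound
  linarith

theorem tendsto_birnbaumBound_mul_stdNormalPdf_atTop :
    Tendsto (fun x => birnbaumBound x * stdNormalPdf x) atTop (𝓝 0) :=
  squeeze_zero' (.of_forall fun x => (mul_pos (birnbaumBound_pos x) (stdNormalPdf_pos x)).le)
    ((eventually_ge_atTop 0).mono fun x hx =>
      mul_le_of_le_one_left (stdNormalPdf_pos x).le (birnbaumBound_le_one hx))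
    tendsto_stdNormalPdf_atTop

theorem birnbaumBound_mul_stdNormalPdf_lt_gaussQ (x : ℝ) :
    birnbaumBound x * stdNormalPdf x < gaussQ x := by
  set g := fun y => gaussQ y - birnbaumBound y * stdNormalPdf y
  have hderiv : ∀ y, HasDerivAt g
      (stdNormalPdf y * birnbaumBound y * ((√(y ^ 2 + 4))⁻¹ - birnbaumBound y)) y := fun y =>
    ((hasDerivAt_gaussQ y).sub ((hasDerivAt_birnbaumBound y).mul
      (hasDerivAt_stdNormalPdf y))).congr_deriv
      (by linear_combination stdNormalPdf y * birnbaumBound_mul_add_self y)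
  have hanti : StrictAnti g := strictAnti_of_hasDerivAt_neg hderiv fun y =>
    mul_neg_of_pos_of_neg (mul_pos (stdNormalPdf_pos y) (birnbaumBound_pos y))
      (sub_neg.2 (inv_sqrt_lt_birnbaumBound y))
  have hlim : Tendsto g atTop (𝓝 0) := by
    simpa using tendsto_gaussQ_atTop.sub tendsto_birnbaumBound_mul_stdNormalPdf_atTop
  exact sub_pos.1 (hanti.lt_of_tendsto_atTop hlim x)

theorem stmt3 (x : ℝ) :
    gaussQ x / (2 * stdNormalPdf x) > 1 / (x + Real.sqrt (x ^ 2 + 4)) := by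
  have hbound : 1 / (x + √(x ^ 2 + 4)) = birnbaumBound x / 2 := by
    rw [birnbaumBound_eq_two_div]; ring
  rw [gt_iff_lt, hbound, lt_div_iff₀ (mul_pos two_pos (stdNormalPdf_pos x))]
  calc birnbaumBound x / 2 * (2 * stdNormalPdf x) = birnbaumBound x * stdNormalPdf x := by ring
    _ < gaussQ x := birnbaumBound_mul_stdNormalPdf_lt_gaussQ x
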